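/- Junction lemma for the reflective map: let γ and β be EREW-adjacent configurations with transfer vector 𝐣 containing the move of disk (v,g) from post c to post b, where all disks of index < g are static and occupy posts different from b and c. Then R^g_{b,c}(γ) and β are either equal or EREW-adjacent with a transfer vector 𝐢 of strictly smaller cardinality than 𝐣; in particular, the move of disk (v,g) is eliminated. -/

import Mathlib

/-- A configuration of `t` towers of `n` disks on `p` posts: entry `α u y` is the
post occupied by the `y`-th largest disk of color `u` (columns 0-indexed,
column `y` holds the disks of size index `y`). -/
abbrev Config (t n p : ℕ) := Fin t → Fin n → Fin p

/-- Validity: no two equal-sized disks share a post (column-wise injectivity). -/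
def ValidConfig {t n p : ℕ} (α : Config t n p) : Prop :=
  ∀ y : Fin n, Function.Injective fun u => α u y

/-- EREW-adjacency: at least one disk moves, and every moved disk is topmost at
its source beforehand and at its destination afterwards. -/
def EREW {t n p : ℕ} (α β : Config t n p) : Prop :=
  α ≠ β ∧
    ∀ u j, α u j ≠ β u j →
      ∀ v : Fin t, ∀ y : Fin n, (j : ℕ) < (y : ℕ) →
        α v y ≠ α u j ∧ β v y ≠ β u j

/-- One step of a valid sequence: equal or EREW-adjacent configurations. -/
def Step {t n p : ℕ} (α β : Config t n p) : Prop := α = β ∨ EREW α β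

/-- The set of disks moved between two configurations (the transfer vector:
each moved disk determines its source and destination posts). -/
def moves {t n p : ℕ} (α β : Config t n p) : Finset (Fin t × Fin n) :=
  Finset.univ.filter fun d => α d.1 d.2 ≠ β d.1 d.2

/-- A valid sequence of configurations. -/
def ValidSeq {t n p : ℕ} (l : List (Config t n p)) : Prop :=
  (∀ α ∈ l, ValidConfig α) ∧ l.Chain' Step

/-- Transfer length of a configuration sequence: total number of disk moves. -/
def transferLength {t n p : ℕ} : List (Config t n p) → ℕ
  | [] => 0
  | [_] => 0
  | α :: β :: rest => (moves α β).card + transferLength (β :: rest)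

/-- Containment in the cluster of grading `g·𝟏` determined by the placement `B`:
the configuration agrees with `B` on all columns of index `< g`. -/
def InCluster {t n p : ℕ} (g : ℕ) (B α : Config t n p) : Prop :=
  ∀ u : Fin t, ∀ y : Fin n, (y : ℕ) < g → α u y = B u y

/-- The translative map onto the cluster of grading `g·𝟏` determined by `B`. -/
def T {t n p : ℕ} (g : ℕ) (B : Config t n p) (α : Config t n p) : Config t n p :=
  fun u y => if (y : ℕ) < g then B u y else α u y

/-- The reflective map swapping posts `q` and `r` on all columns of index `≥ g`. -/
def R {t n p : ℕ} (g : ℕ) (q r : Fin p) (α : Config t n p) : Config t n p :=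
  fun u y => if g ≤ (y : ℕ) then
    (if α u y = q then r else if α u y = r then q else α u y) else α u y

/-!
Above column `g`, `R^g_{b,c}` acts by the transposition `(b c)`, which is injective, so it
preserves the EREW conditions of every disk it does not fix. It fixes every disk that does not
move: below column `g` all disks are static, and a static disk in a column `≥ g` can sit on
neither `b` nor `c`: above column `g` because `(v,g)` is topmost on `c` before and on `b` after
its move, and in column `g` itself because `(v,g)` already occupies `c` before and `b` after.
So the moves from `R^g_{b,c}(γ)` to `β` are among those from `γ` to `β`, and `(v,g)` no longer
moves since `(b c)` sends `c` to `b`.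
-/

section Reflection

variable {t n p : ℕ}

theorem mem_moves {α β : Config t n p} {x : Fin t × Fin n} :
    x ∈ moves α β ↔ α x.1 x.2 ≠ β x.1 x.2 := by
  simp [moves]

theorem R_apply_of_le {g : ℕ} {q r : Fin p} {α : Config t n p} {u : Fin t} {y : Fin n}
    (hy : g ≤ (y : ℕ)) : R g q r α u y = Equiv.swap q r (α u y) := by
  simp [R, hy, Equiv.swap_apply_def]

theorem R_apply_of_lt {g : ℕ} {q r : Fin p} {α : Config t n p} {u : Fin t} {y : Fin n}
    (hy : (y : ℕ) < g) : R g q r α u y = α u y := by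
  simp [R, not_le.mpr hy]

theorem moved_of_R_moved {g : ℕ} {q r : Fin p} {α β : Config t n p}
    (hbelow : ∀ u : Fin t, ∀ y : Fin n, (y : ℕ) < g → α u y = β u y)
    (havoid : ∀ u : Fin t, ∀ y : Fin n, g ≤ (y : ℕ) → α u y = β u y → α u y ≠ q ∧ α u y ≠ r)
    {u : Fin t} {j : Fin n} (hne : R g q r α u j ≠ β u j) :
    α u j ≠ β u j ∧ g ≤ (j : ℕ) := by
  have hj : g ≤ (j : ℕ) := by
    by_contra! hj
    exact hne (by rw [R_apply_of_lt hj, hbelow u j hj])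
  refine ⟨fun heq => hne ?_, hj⟩
  obtain ⟨hq, hr⟩ := havoid u j hj heq
  rw [R_apply_of_le hj, Equiv.swap_apply_of_ne_of_ne hq hr, heq]

theorem EREW.R_left {g : ℕ} {q r : Fin p} {α β : Config t n p} (h : EREW α β)
    (hne : R g q r α ≠ β)
    (hmoved : ∀ u j, R g q r α u j ≠ β u j → α u j ≠ β u j ∧ g ≤ (j : ℕ)) :
    EREW (R g q r α) β := by
  refine ⟨hne, fun u j hRne w y hjy => ?_⟩
  obtain ⟨hne', hgj⟩ := hmoved u j hRne
  obtain ⟨hsrc, hdst⟩ := h.2 u j hne' w y hjy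
  refine ⟨?_, hdst⟩
  rw [R_apply_of_le (hgj.trans hjy.le), R_apply_of_le hgj]
  exact (Equiv.swap q r).injective.ne hsrc

theorem card_moves_lt {α α' β : Config t n p}
    (himp : ∀ u j, α' u j ≠ β u j → α u j ≠ β u j) {v : Fin t} {d : Fin n}
    (hmoved : α v d ≠ β v d) (hfixed : α' v d = β v d) :
    (moves α' β).card < (moves α β).card := by
  have hsub : moves α' β ⊆ moves α β := fun x hx => mem_moves.2 (himp _ _ (mem_moves.1 hx))
  refine Finset.card_lt_card ((Finset.ssubset_iff_of_subset hsub).2 ⟨(v, d), ?_, ?_⟩)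
  · exact mem_moves.2 hmoved
  · exact fun h => mem_moves.1 h hfixed

theorem EREW.static_ne_of_move {α β : Config t n p} (hα : ValidConfig α) (hβ : ValidConfig β)
    (h : EREW α β) {v : Fin t} {d : Fin n} {b c : Fin p} (hbc : b ≠ c)
    (hsrc : α v d = c) (hdst : β v d = b) {u : Fin t} {y : Fin n} (hy : (d : ℕ) ≤ y)
    (hstatic : α u y = β u y) : α u y ≠ b ∧ α u y ≠ c := by
  have hmoved : α v d ≠ β v d := by rw [hsrc, hdst]; exact hbc.symm
  rcases hy.lt_or_eq with hlt | heq
  · obtain ⟨hsrc', hdst'⟩ := h.2 v d hmoved u y hlt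
    rw [hsrc] at hsrc'
    rw [hdst, ← hstatic] at hdst'
    exact ⟨hdst', hsrc'⟩
  · obtain rfl : d = y := Fin.ext heq
    have huv : u ≠ v := by rintro rfl; exact hmoved hstatic
    refine ⟨fun hb => huv (hβ d ?_), fun hc => huv (hα d ?_)⟩
    · simp only [← hstatic, hb, hdst]
    · simp only [hc, hsrc]

end Reflection

/-- junction lemma for the reflective map: if `γ` and `β` are
EREW-adjacent, disk `(v,g)` moves from `c` to `b`, and all disks of index `< g`
are static on posts different from `b` and `c`, then `R^g_{b,c}(γ)` and `β` are
equal or EREW-adjacent, with strictly fewer moves; in particular the move of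
disk `(v,g)` is eliminated. -/
theorem junction_lemma {t n p : ℕ} (v : Fin t) (d : Fin n) (b c : Fin p)
    (hbc : b ≠ c) (γ β : Config t n p)
    (hγ : ValidConfig γ) (hβ : ValidConfig β) (h : EREW γ β)
    (hsrc : γ v d = c) (hdst : β v d = b)
    (hstatic : ∀ u : Fin t, ∀ y : Fin n, (y : ℕ) < (d : ℕ) →
      γ u y = β u y ∧ γ u y ≠ b ∧ γ u y ≠ c) :
    (R (d : ℕ) b c γ = β ∨ EREW (R (d : ℕ) b c γ) β) ∧
    (moves (R (d : ℕ) b c γ) β).card < (moves γ β).card ∧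
    (R (d : ℕ) b c γ) v d = β v d := by
  have hmoved : γ v d ≠ β v d := by rw [hsrc, hdst]; exact hbc.symm
  have hfixed : R d b c γ v d = β v d := by
    rw [R_apply_of_le le_rfl, hsrc, hdst, Equiv.swap_apply_right]
  have hRmoved : ∀ u j, R d b c γ u j ≠ β u j → γ u j ≠ β u j ∧ (d : ℕ) ≤ j :=
    fun _ _ => moved_of_R_moved (fun u y hy => (hstatic u y hy).1)
      (fun _ _ hy hs => h.static_ne_of_move hγ hβ hbc hsrc hdst hy hs)
  refine ⟨?_, card_moves_lt (fun u j hne => (hRmoved u j hne).1) hmoved hfixed, hfixed⟩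
  by_cases heq : R d b c γ = β
  · exact Or.inl heq
  · exact Or.inr (h.R_left heq hRmoved)
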